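/- Let μ be a finite positive Borel measure on [0,1] such that Σ_{k∈ℤ} |∫ e_k dμ|² < ∞, where e_k(x) = e^{2πikx}. Then the densely defined operator F from ℓ²(ℤ) to L²(μ), defined on finitely supported sequences by F((c_k)) = Σ_k c_k e_k, is closable. -/

import Mathlib

/-!
Write `μ̂(n) = ∫ e_n dμ`. If `(0, g)` lies in the closure of the graph of `F`, then `g` is
orthogonal to every `e_k`: the functional `c ↦ ⟪e_k, F c⟫ = Σ_j c_j μ̂(j - k)` is the inner
product with the sequence `j ↦ conj μ̂(j - k)`, which is in `ℓ²` by the summability hypothesis,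
so it is continuous and vanishes in the limit. Since `g` is also a limit of trigonometric
polynomials `F c`, this forces `⟪g, g⟫ = 0`. No density of the exponentials in `L²(μ)` is needed
(it fails when `μ` has atoms at both `0` and `1`).
-/

open MeasureTheory
open scoped InnerProductSpace

namespace LinearPMap

theorem isClosable_of_closure_graph_fst_eq_zero {R E F : Type*} [CommRing R] [TopologicalSpace R]
    [AddCommGroup E] [Module R E] [TopologicalSpace E] [ContinuousAdd E] [ContinuousSMul R E]
    [AddCommGroup F] [Module R F] [TopologicalSpace F] [ContinuousAdd F] [ContinuousSMul R F]
    {T : E →ₗ.[R] F} (h : ∀ y : F, ((0 : E), y) ∈ T.graph.topologicalClosure → y = 0) :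
    T.IsClosable :=
  ⟨_, (Submodule.toLinearPMap_graph_eq _ fun p hp hp0 => h p.2 (hp0 ▸ hp)).symm⟩

variable {𝕜 E F : Type*} [RCLike 𝕜] [NormedAddCommGroup E] [InnerProductSpace 𝕜 E]
  [NormedAddCommGroup F] [InnerProductSpace 𝕜 F]

theorem isClosable_of_mem_span_of_inner_eq (T : E →ₗ.[𝕜] F) (S : Set F)
    (hspan : ∀ x : T.domain, T x ∈ Submodule.span 𝕜 S)
    (hadj : ∀ s ∈ S, ∃ b : E, ∀ x : T.domain, ⟪s, T x⟫_𝕜 = ⟪b, (x : E)⟫_𝕜) :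
    T.IsClosable := by
  refine isClosable_of_closure_graph_fst_eq_zero fun g hg => ?_
  have hclosure {C : Set (E × F)} (hC : _root_.IsClosed C)
      (hT : ∀ x : T.domain, ((x : E), T x) ∈ C) : ((0 : E), g) ∈ C := by
    refine closure_minimal (fun ⟨y, z⟩ hp => ?_) hC hg
    obtain ⟨x, rfl, rfl⟩ := T.mem_graph_iff.1 hp
    exact hT x
  have hperp : ∀ s ∈ S, ⟪s, g⟫_𝕜 = 0 := fun s hs => by
    obtain ⟨b, hb⟩ := hadj s hs
    simpa using hclosure (C := {p | ⟪s, p.2⟫_𝕜 = ⟪b, p.1⟫_𝕜})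
      (isClosed_eq (by fun_prop) (by fun_prop)) hb
  have hperp_range : ∀ x : T.domain, ⟪T x, g⟫_𝕜 = 0 := fun x =>
    (Submodule.isOrtho_span.2 fun s hs _ hv => (Set.mem_singleton_iff.1 hv) ▸ hperp s hs).inner_eq
      (hspan x) (Submodule.subset_span rfl)
  exact inner_self_eq_zero.1 <| hclosure (C := {p | ⟪p.2, g⟫_𝕜 = 0})
    (isClosed_eq (by fun_prop) continuous_const) hperp_range

end LinearPMap

noncomputable def expMode (k : ℤ) (x : ℝ) : ℂ := Complex.exp (2 * Real.pi * Complex.I * k * x)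

theorem norm_expMode (k : ℤ) (x : ℝ) : ‖expMode k x‖ = 1 := by
  rw [expMode, show 2 * (Real.pi : ℂ) * Complex.I * k * x =
    ((2 * Real.pi * k * x : ℝ) : ℂ) * Complex.I by push_cast; ring]
  exact Complex.norm_exp_ofReal_mul_I _

theorem continuous_expMode (k : ℤ) : Continuous (expMode k) := by
  unfold expMode; fun_prop

theorem conj_expMode_mul_expMode (k j : ℤ) (x : ℝ) :
    (starRingEnd ℂ) (expMode k x) * expMode j x = expMode (j - k) x := by
  simp only [expMode, ← Complex.exp_conj, ← Complex.exp_add, map_mul, Complex.conj_I,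
    Complex.conj_ofReal, map_ofNat, map_intCast]
  push_cast
  ring_nf

theorem memLp_expMode {μ : Measure ℝ} [IsFiniteMeasure μ] (p : ENNReal) (k : ℤ) :
    MemLp (expMode k) p μ :=
  MemLp.of_bound (continuous_expMode k).aestronglyMeasurable 1
    (Filter.Eventually.of_forall fun x => (norm_expMode k x).le)

noncomputable def expModeLp (μ : Measure ℝ) [IsFiniteMeasure μ] (k : ℤ) : Lp ℂ 2 μ :=
  (memLp_expMode 2 k).toLp _

variable {μ : Measure ℝ} [IsFiniteMeasure μ]

theorem coeFn_expModeLp (k : ℤ) : expModeLp μ k =ᵐ[μ] expMode k :=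
  (memLp_expMode 2 k).coeFn_toLp

theorem inner_expModeLp (k j : ℤ) :
    ⟪expModeLp μ k, expModeLp μ j⟫_ℂ = ∫ x, expMode (j - k) x ∂μ := by
  rw [L2.inner_def]
  refine integral_congr_ae ?_
  filter_upwards [coeFn_expModeLp k, coeFn_expModeLp j] with x hk hj
  rw [hk, hj, RCLike.inner_apply, mul_comm, conj_expMode_mul_expMode]

theorem eq_sum_smul_expModeLp {f : Lp ℂ 2 μ} {c : ℤ → ℂ} (hc : (Function.support c).Finite)
    (hf : f =ᵐ[μ] fun x => ∑ᶠ k, c k * expMode k x) :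
    f = ∑ k ∈ hc.toFinset, c k • expModeLp μ k := by
  refine Lp.ext ?_
  filter_upwards [hf, Lp.coeFn_fun_finsetSum hc.toFinset (fun k => c k • expModeLp μ k),
    ae_all_iff.2 fun k => Lp.coeFn_smul (c k) (expModeLp μ k),
    ae_all_iff.2 fun k => coeFn_expModeLp (μ := μ) k] with x hfx hsum hsmul hexp
  rw [hfx, hsum, finsum_eq_sum_of_support_subset _ (s := hc.toFinset) ?_]
  · simp only [hsmul, Pi.smul_apply, hexp, smul_eq_mul]
  · intro k hk
    simpa using left_ne_zero_of_mul hk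

theorem inner_expModeLp_sum_smul (k : ℤ) (s : Finset ℤ) (c : ℤ → ℂ) :
    ⟪expModeLp μ k, ∑ j ∈ s, c j • expModeLp μ j⟫_ℂ =
      ∑ j ∈ s, c j * ∫ x, expMode (j - k) x ∂μ := by
  simp only [inner_sum, inner_smul_right, inner_expModeLp]

theorem memℓp_two_conj_comp_sub {a : ℤ → ℂ} (ha : Summable fun j => ‖a j‖ ^ 2) (k : ℤ) :
    Memℓp (fun j => (starRingEnd ℂ) (a (j - k))) 2 := by
  refine memℓp_gen ?_
  simpa [RCLike.norm_conj, Function.comp_def] using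
    ha.comp_injective (sub_left_injective (b := k))

theorem lp.inner_eq_sum_of_forall_notMem_eq_zero {ι 𝕜 : Type*} {G : ι → Type*} [RCLike 𝕜]
    [∀ i, NormedAddCommGroup (G i)] [∀ i, InnerProductSpace 𝕜 (G i)] (f g : lp G 2)
    (s : Finset ι) (hg : ∀ i ∉ s, g i = 0) : ⟪f, g⟫_𝕜 = ∑ i ∈ s, ⟪f i, g i⟫_𝕜 := by
  rw [lp.inner_eq_tsum, tsum_eq_sum fun i hi => by rw [hg i hi, inner_zero_right]]

theorem stmt2_general (μ : Measure ℝ) [IsFiniteMeasure μ]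
    (hsum : Summable fun k : ℤ =>
      ‖∫ x, Complex.exp (2 * Real.pi * Complex.I * (k : ℂ) * (x : ℂ)) ∂μ‖ ^ 2)
    (F : (lp (fun _ : ℤ => ℂ) 2) →ₗ.[ℂ] Lp ℂ 2 μ)
    (hdom : ∀ c : lp (fun _ : ℤ => ℂ) 2, c ∈ F.domain ↔ (Function.support ⇑c).Finite)
    (hF : ∀ c : F.domain, ⇑(F c) =ᵐ[μ]
      fun x => ∑ᶠ k : ℤ,
        (↑(c : F.domain) : lp (fun _ : ℤ => ℂ) 2) k
          * Complex.exp (2 * Real.pi * Complex.I * (k : ℂ) * (x : ℂ))) :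
    F.IsClosable := by
  have hrep (c : F.domain) :
      F c = ∑ j ∈ ((hdom c).1 c.2).toFinset, (c : lp (fun _ : ℤ => ℂ) 2) j • expModeLp μ j :=
    eq_sum_smul_expModeLp _ (hF c)
  refine F.isClosable_of_mem_span_of_inner_eq (Set.range (expModeLp μ)) (fun c => ?_) ?_
  · rw [hrep c]
    exact Submodule.sum_mem _ fun j _ => Submodule.smul_mem _ _ (Submodule.subset_span ⟨j, rfl⟩)
  rintro _ ⟨k, rfl⟩
  refine ⟨⟨_, memℓp_two_conj_comp_sub (a := fun k => ∫ x, expMode k x ∂μ) hsum k⟩, fun c => ?_⟩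
  set s := ((hdom c).1 c.2).toFinset
  rw [hrep c, inner_expModeLp_sum_smul, lp.inner_eq_sum_of_forall_notMem_eq_zero _ _ s
    fun j hj => by simpa [s] using hj]
  simp only [RCLike.inner_apply, RingHomCompTriple.comp_apply, RingHom.id_apply, s]

/-- Let `μ` be a finite positive Borel measure on `[0,1]` such that
`Σ_{k∈ℤ} |∫ e_k dμ|² < ∞`, where `e_k x = exp(2πikx)`. Then the densely defined operator
`F` from `ℓ²(ℤ)` to `L²(μ)`, defined on finitely supported sequences by
`F((c_k)) = Σ_k c_k e_k`, is closable. -/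
theorem stmt2 (μ : Measure ℝ) [IsFiniteMeasure μ]
    (hsupp : μ (Set.Icc (0 : ℝ) 1)ᶜ = 0)
    (hsum : Summable fun k : ℤ =>
      ‖∫ x, Complex.exp (2 * Real.pi * Complex.I * (k : ℂ) * (x : ℂ)) ∂μ‖ ^ 2)
    (F : (lp (fun _ : ℤ => ℂ) 2) →ₗ.[ℂ] Lp ℂ 2 μ)
    (hdom : ∀ c : lp (fun _ : ℤ => ℂ) 2, c ∈ F.domain ↔ (Function.support ⇑c).Finite)
    (hF : ∀ c : F.domain, ⇑(F c) =ᵐ[μ]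
      fun x => ∑ᶠ k : ℤ,
        (↑(c : F.domain) : lp (fun _ : ℤ => ℂ) 2) k
          * Complex.exp (2 * Real.pi * Complex.I * (k : ℂ) * (x : ℂ))) :
    F.IsClosable :=
  stmt2_general μ hsum F hdom hF
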